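/- arXiv:2409.16171 — 6 statements merged into one kernel-verified Lean document; each statement's English description precedes it below -/
import Mathlib

section
/- Let ρ, σ > 0 and 0 ≤ ν < κ ≤ 1. Set r = min{ν/κ, 1 − ν/κ} and r' = min{2r, 1 − 2r}. Then r·(√(ρ^κ σ^{1−κ}) − √σ)² + K((ρ/σ)^{κ/2}, 2)^{r'} · ρ^ν σ^{1−ν} ≤ ν·ρ + (1−ν)·σ − (ν/κ)·(κ·ρ + (1−κ)·σ − ρ^κ σ^{1−κ}). -/
/-- The Kantorovich constant `K(t,2) = (t+1)^2/(4t)`. -/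
noncomputable def kantorovich (t : ℝ) : ℝ := (t + 1) ^ 2 / (4 * t)

lemma convA {c : ℝ} (hc : 0 < c) {μ : ℝ} (h0 : 0 ≤ μ) (h1 : μ ≤ 1/2) :
    c ^ μ ≤ 1 - 2*μ + 2*μ * Real.sqrt c := by
  have hkey := convexOn_exp.2 (Set.mem_univ (0:ℝ)) (Set.mem_univ (Real.log c / 2))
    (by linarith : (0:ℝ) ≤ 1 - 2*μ) (by linarith : (0:ℝ) ≤ 2*μ) (by ring)
  simp only [smul_eq_mul, mul_zero, zero_add, Real.exp_zero] at hkey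
  have h3 : c ^ μ = Real.exp (μ * Real.log c) := by
    rw [Real.rpow_def_of_pos hc, mul_comm]
  have h4 : Real.sqrt c = Real.exp (Real.log c / 2) := by
    rw [Real.sqrt_eq_rpow, Real.rpow_def_of_pos hc,
      show Real.log c * (1/2) = Real.log c / 2 by ring]
  rw [h3, h4]
  calc Real.exp (μ * Real.log c)
      = Real.exp (2*μ * (Real.log c / 2)) := by rw [show μ * Real.log c = 2*μ*(Real.log c/2) by ring]
    _ ≤ (1 - 2*μ) * 1 + (2*μ) * Real.exp (Real.log c / 2) := hkey
    _ = 1 - 2*μ + 2*μ * Real.exp (Real.log c / 2) := by ring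

lemma scalar {t h : ℝ} (ht : 0 < t) (h0 : 0 ≤ h) (h2 : h ≤ 1/2) :
    kantorovich t ^ (min (2*h) (1-2*h)) * t ^ (2*h) ≤ 2*h*t + 1 - 2*h := by
  have hK : 0 ≤ kantorovich t := by
    unfold kantorovich; positivity
  rcases le_total h (1/4) with hc | hc
  · have hmin : min (2*h) (1-2*h) = 2*h := min_eq_left (by linarith)
    rw [hmin, ← Real.mul_rpow hK ht.le]
    have hKt : kantorovich t * t = ((t+1)/2)^2 := by
      unfold kantorovich; field_simp; ring
    rw [hKt]
    have hA := convA (c := ((t+1)/2)^2) (by positivity) (μ := 2*h)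
      (by linarith) (by linarith)
    rw [Real.sqrt_sq (by positivity)] at hA
    calc (((t+1)/2)^2) ^ (2*h) ≤ 1 - 2*(2*h) + 2*(2*h) * ((t+1)/2) := hA
      _ = 2*h*t + 1 - 2*h := by ring
  · set ν := 1 - 2*h with hν
    have hmin : min (2*h) (1-2*h) = ν := min_eq_right (by simp [hν]; linarith)
    rw [hmin]
    have h2h : 2*h = 1 - ν := by rw [hν]; ring
    have e1 : kantorovich t ^ ν * t ^ (2*h) = t * (((t+1)/(2*t))^2) ^ ν := by
      rw [h2h, Real.rpow_sub ht, Real.rpow_one]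
      have : ((t+1)/(2*t))^2 = kantorovich t / t := by
        unfold kantorovich; field_simp; ring
      rw [this, Real.div_rpow hK ht.le]
      field_simp
    rw [e1]
    have hA := convA (c := ((t+1)/(2*t))^2) (by positivity) (μ := ν)
      (by rw [hν]; linarith) (by rw [hν]; linarith)
    rw [Real.sqrt_sq (by positivity)] at hA
    have := mul_le_mul_of_nonneg_left hA ht.le
    calc t * (((t+1)/(2*t))^2) ^ ν ≤ t * (1 - 2*ν + 2*ν * ((t+1)/(2*t))) := this
      _ = 2*h*t + 1 - 2*h := by rw [hν]; field_simp; ring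

lemma half {x y h : ℝ} (hx : 0 < x) (hy : 0 < y) (h0 : 0 ≤ h) (h2 : h ≤ 1/2) :
    h * (Real.sqrt x - Real.sqrt y)^2
      + kantorovich (Real.sqrt (x/y)) ^ (min (2*h) (1-2*h)) * (x ^ h * y ^ (1-h))
    ≤ h * x + (1-h) * y := by
  set t := Real.sqrt (x/y) with htdef
  have ht : 0 < t := Real.sqrt_pos.mpr (div_pos hx hy)
  have hsy : 0 < Real.sqrt y := Real.sqrt_pos.mpr hy
  have hsx : Real.sqrt x = t * Real.sqrt y := by
    rw [htdef, Real.sqrt_div hx.le, div_mul_cancel₀ _ hsy.ne']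
  have hxty : x = t^2 * y := by
    have : Real.sqrt x ^ 2 = (t * Real.sqrt y)^2 := by rw [hsx]
    rw [Real.sq_sqrt hx.le] at this
    rw [this, mul_pow, Real.sq_sqrt hy.le]
  have hxh : x ^ h = t ^ (2*h) * y ^ h := by
    rw [hxty, Real.mul_rpow (by positivity) hy.le,
      ← Real.rpow_natCast t 2, ← Real.rpow_mul ht.le]
    norm_num
  have hyy : y ^ h * y ^ (1-h) = y := by
    rw [← Real.rpow_add hy]; norm_num
  have hsq : (Real.sqrt x - Real.sqrt y)^2 = (t-1)^2 * y := by
    rw [hsx, show t * Real.sqrt y - Real.sqrt y = (t-1) * Real.sqrt y by ring,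
      mul_pow, Real.sq_sqrt hy.le]
  have hs := scalar ht h0 h2
  have hs' := mul_le_mul_of_nonneg_right hs hy.le
  rw [hsq, hxh, hxty]
  calc h * ((t-1)^2 * y) + kantorovich t ^ min (2*h) (1-2*h) * (t ^ (2*h) * y ^ h * y ^ (1-h))
      = h * ((t-1)^2 * y) + kantorovich t ^ min (2*h) (1-2*h) * t ^ (2*h) * y := by
        rw [mul_assoc (t ^ (2*h)), hyy]; ring
    _ ≤ h * ((t-1)^2 * y) + (2*h*t + 1 - 2*h) * y := by linarith
    _ = h * (t^2*y) + (1-h) * y := by ring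

lemma kant_inv {t : ℝ} (ht : 0 < t) : kantorovich t⁻¹ = kantorovich t := by
  unfold kantorovich
  field_simp
  ring

lemma main {x y h : ℝ} (hx : 0 < x) (hy : 0 < y) (h0 : 0 ≤ h) (h1 : h ≤ 1) :
    min h (1-h) * (Real.sqrt x - Real.sqrt y)^2
      + kantorovich (Real.sqrt (x/y)) ^ (min (2 * min h (1-h)) (1 - 2 * min h (1-h)))
        * (x ^ h * y ^ (1-h))
    ≤ h * x + (1-h) * y := by
  rcases le_total h (1/2) with hc | hc
  · have hmin : min h (1-h) = h := min_eq_left (by linarith)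
    rw [hmin]
    exact half hx hy h0 hc
  · have hmin : min h (1-h) = 1-h := min_eq_right (by linarith)
    rw [hmin]
    have hh := half hy hx (by linarith : (0:ℝ) ≤ 1-h) (by linarith)
    have e1 : Real.sqrt (y/x) = (Real.sqrt (x/y))⁻¹ := by
      rw [show y/x = (x/y)⁻¹ by field_simp, Real.sqrt_inv]
    have ht : 0 < Real.sqrt (x/y) := Real.sqrt_pos.mpr (div_pos hx hy)
    rw [e1, kant_inv ht] at hh
    have e2 : (Real.sqrt y - Real.sqrt x)^2 = (Real.sqrt x - Real.sqrt y)^2 := by ring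
    rw [e2] at hh
    have e3 : 1 - (1-h) = h := by ring
    rw [e3] at hh
    calc (1-h) * (Real.sqrt x - Real.sqrt y)^2
        + kantorovich (Real.sqrt (x/y)) ^ (min (2*(1-h)) (1 - 2*(1-h))) * (x ^ h * y ^ (1-h))
        = (1-h) * (Real.sqrt x - Real.sqrt y)^2
          + kantorovich (Real.sqrt (x/y)) ^ (min (2*(1-h)) (1 - 2*(1-h))) * (y ^ (1-h) * x ^ h) := by
          ring
      _ ≤ (1-h) * y + h * x := hh
      _ = h * x + (1-h) * y := by ring

theorem stmt_0 (ρ σ ν κ : ℝ) (hρ : 0 < ρ) (hσ : 0 < σ)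
    (hν : 0 ≤ ν) (hνκ : ν < κ) (hκ : κ ≤ 1)
    (r r' : ℝ) (hr : r = min (ν / κ) (1 - ν / κ)) (hr' : r' = min (2 * r) (1 - 2 * r)) :
    r * (Real.sqrt (ρ ^ κ * σ ^ (1 - κ)) - Real.sqrt σ) ^ 2
      + kantorovich ((ρ / σ) ^ (κ / 2)) ^ r' * (ρ ^ ν * σ ^ (1 - ν))
    ≤ ν * ρ + (1 - ν) * σ - (ν / κ) * (κ * ρ + (1 - κ) * σ - ρ ^ κ * σ ^ (1 - κ)) := by
  subst hr'
  subst hr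
  have hκ0 : 0 < κ := lt_of_le_of_lt hν hνκ
  set h := ν / κ with hhdef
  have h0 : 0 ≤ h := div_nonneg hν hκ0.le
  have h1 : h ≤ 1 := le_of_lt ((div_lt_one hκ0).mpr hνκ)
  set x := ρ ^ κ * σ ^ (1-κ) with hxdef
  have hx : 0 < x := mul_pos (Real.rpow_pos_of_pos hρ κ) (Real.rpow_pos_of_pos hσ (1-κ))
  have hνh : ν = h * κ := by rw [hhdef]; field_simp
  -- key1 : ρ^ν σ^{1-ν} = x^h σ^{1-h}
  have key1 : ρ ^ ν * σ ^ (1-ν) = x ^ h * σ ^ (1-h) := by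
    rw [hxdef, Real.mul_rpow (Real.rpow_pos_of_pos hρ κ).le (Real.rpow_pos_of_pos hσ (1-κ)).le,
      ← Real.rpow_mul hρ.le, ← Real.rpow_mul hσ.le, mul_assoc,
      ← Real.rpow_add hσ]
    have e1 : κ * h = ν := by rw [hνh]; ring
    have e2 : (1-κ) * h + (1-h) = 1 - ν := by
      rw [hνh]; ring
    rw [e1, e2]
  -- key2 : (ρ/σ)^(κ/2) = √(x/σ)
  have key2 : (ρ/σ) ^ (κ/2) = Real.sqrt (x/σ) := by
    have hxσ : x / σ = (ρ/σ) ^ κ := by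
      rw [hxdef, Real.div_rpow hρ.le hσ.le]
      rw [div_eq_div_iff hσ.ne' (Real.rpow_pos_of_pos hσ κ).ne']
      rw [mul_assoc, ← Real.rpow_add hσ]
      norm_num
    rw [hxσ, Real.sqrt_eq_rpow, ← Real.rpow_mul (div_pos hρ hσ).le]
    congr 1
    ring
  -- key3 : RHS = h*x + (1-h)*σ
  have key3 : ν * ρ + (1-ν) * σ - h * (κ * ρ + (1-κ) * σ - x) = h * x + (1-h) * σ := by
    rw [hνh]; ring
  rw [key1, key2, key3]
  exact main hx hσ h0 h1
end

section
/- Let ρ, σ > 0 and 0 ≤ ν < κ ≤ 1. Set r = min{ν/κ, 1 − ν/κ}, R = max{ν/κ, 1 − ν/κ} and r' = min{2r, 1 − 2r}. Then ν·ρ + (1−ν)·σ − (ν/κ)·(κ·ρ + (1−κ)·σ − ρ^κ σ^{1−κ}) ≤ K((ρ/σ)^{κ/2}, 2)^{−r'} · ρ^ν σ^{1−ν} + R·(√(ρ^κ σ^{1−κ}) − √σ)². -/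
lemma kant_pos {x : ℝ} (hx : 0 < x) : 0 < kantorovich x := by
  unfold kantorovich; positivity

lemma kant_inv_s1 {x : ℝ} (hx : 0 < x) : kantorovich x⁻¹ = kantorovich x := by
  unfold kantorovich; field_simp; ring

lemma zuo_half {A B l : ℝ} (hA : 0 < A) (hB : 0 < B) (hl0 : 0 ≤ l) (hl : l ≤ 1/2) :
    kantorovich (A / B) ^ l * (A ^ l * B ^ (1 - l)) ≤ l * A + (1 - l) * B := by
  have hAB : 0 < A + B := by linarith
  have hK : kantorovich (A / B) = (A + B) ^ 2 / (4 * A * B) := by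
    unfold kantorovich; field_simp
  have hKpos : 0 < kantorovich (A / B) := kant_pos (by positivity)
  have l4 : Real.log 4 = 2 * Real.log 2 := by
    rw [show (4:ℝ) = 2^2 by norm_num, Real.log_pow]; push_cast; ring
  have key : kantorovich (A / B) ^ l * (A ^ l * B ^ (1 - l))
      = ((A + B) / 2) ^ (2 * l) * B ^ (1 - 2 * l) := by
    rw [← Real.exp_log (show (0:ℝ) < kantorovich (A / B) ^ l * (A ^ l * B ^ (1 - l)) by
          positivity),
        ← Real.exp_log (show (0:ℝ) < ((A + B) / 2) ^ (2 * l) * B ^ (1 - 2 * l) by positivity)]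
    congr 1
    rw [Real.log_mul (by positivity) (by positivity),
        Real.log_mul (by positivity) (by positivity),
        Real.log_mul (by positivity) (by positivity),
        Real.log_rpow hKpos, Real.log_rpow hA, Real.log_rpow hB,
        Real.log_rpow (by positivity), Real.log_rpow hB, hK,
        Real.log_div (by positivity) (by positivity),
        Real.log_div (by positivity) (by norm_num),
        Real.log_pow,
        Real.log_mul (by positivity) (by positivity),
        Real.log_mul (by norm_num) (by positivity), l4]
    push_cast
    ring
  rw [key]
  calc ((A + B) / 2) ^ (2 * l) * B ^ (1 - 2 * l)
      ≤ 2 * l * ((A + B) / 2) + (1 - 2 * l) * B :=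
        Real.geom_mean_le_arith_mean2_weighted (by linarith) (by linarith) (by positivity)
          hB.le (by ring)
    _ = l * A + (1 - l) * B := by ring

lemma zuo {A B l : ℝ} (hA : 0 < A) (hB : 0 < B) (hl0 : 0 ≤ l) (hl : l ≤ 1) :
    kantorovich (A / B) ^ (min l (1 - l)) * (A ^ l * B ^ (1 - l)) ≤ l * A + (1 - l) * B := by
  rcases le_or_gt l (1/2) with h | h
  · rw [min_eq_left (by linarith)]
    exact zuo_half hA hB hl0 h
  · rw [min_eq_right (by linarith)]
    have := zuo_half hB hA (l := 1 - l) (by linarith) (by linarith)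
    have hsym : kantorovich (B / A) = kantorovich (A / B) := by
      rw [show B / A = (A / B)⁻¹ by rw [inv_div]]
      exact kant_inv_s1 (by positivity)
    rw [hsym] at this
    calc kantorovich (A / B) ^ (1 - l) * (A ^ l * B ^ (1 - l))
        = kantorovich (A / B) ^ (1 - l) * (B ^ (1 - l) * A ^ (1 - (1 - l))) := by
          rw [show 1 - (1 - l) = l by ring]; ring
      _ ≤ (1 - l) * B + (1 - (1 - l)) * A := this
      _ = l * A + (1 - l) * B := by ring

lemma key_half {a b t : ℝ} (ha : 0 < a) (hb : 0 < b) (ht0 : 0 ≤ t) (ht : t ≤ 1/2) :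
    t * a + (1 - t) * b
      ≤ kantorovich (Real.sqrt (a / b)) ^ (-(min (2*t) (1 - 2*t))) * (a ^ t * b ^ (1 - t))
        + (1 - t) * (Real.sqrt a - Real.sqrt b) ^ 2 := by
  set x := Real.sqrt (a / b) with hx
  have hxpos : 0 < x := Real.sqrt_pos.mpr (by positivity)
  have hs : 0 < Real.sqrt (a * b) := Real.sqrt_pos.mpr (by positivity)
  have hsa : Real.sqrt a ^ 2 = a := Real.sq_sqrt ha.le
  have hsb : Real.sqrt b ^ 2 = b := Real.sq_sqrt hb.le
  have hsab : Real.sqrt a * Real.sqrt b = Real.sqrt (a * b) := (Real.sqrt_mul ha.le b).symm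
  have hKpos : 0 < kantorovich x := kant_pos hxpos
  set r' := min (2*t) (1 - 2*t) with hr'
  -- a / √(ab) = x
  have hdiv : a / Real.sqrt (a * b) = x := by
    rw [eq_comm, eq_div_iff hs.ne', hx,
        ← Real.sqrt_mul (by positivity : (0:ℝ) ≤ a / b),
        show a / b * (a * b) = a ^ 2 by field_simp]
    exact Real.sqrt_sq ha.le
  -- Zuo with A = a, B = √(ab), l = 1 - 2t
  have hz := zuo (A := a) (B := Real.sqrt (a*b)) (l := 1 - 2*t) ha hs
    (by linarith) (by linarith)
  rw [hdiv] at hz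
  have hmin : min (1 - 2*t) (1 - (1 - 2*t)) = r' := by
    rw [hr', show 1 - (1 - 2*t) = 2*t by ring, min_comm]
  rw [hmin] at hz
  -- rewrite the geometric part
  have hgeo : a ^ (1 - 2*t) * Real.sqrt (a*b) ^ (1 - (1 - 2*t)) = a ^ (1-t) * b ^ t := by
    rw [show 1 - (1 - 2*t) = 2*t by ring, Real.sqrt_eq_rpow,
        ← Real.rpow_mul (by positivity : (0:ℝ) ≤ a * b)]
    rw [show (1:ℝ)/2 * (2*t) = t by ring, Real.mul_rpow ha.le hb.le,
        ← mul_assoc, ← Real.rpow_add ha]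
    ring_nf
  rw [hgeo] at hz
  set u := kantorovich x ^ r' * (a ^ (1-t) * b ^ t) with hu
  set v := kantorovich x ^ (-r') * (a ^ t * b ^ (1-t)) with hv
  have hupos : 0 < u := by rw [hu]; positivity
  have hvpos : 0 < v := by rw [hv]; positivity
  have huv : u * v = a * b := by
    rw [hu, hv]
    rw [show kantorovich x ^ r' * (a ^ (1-t) * b ^ t) * (kantorovich x ^ (-r') * (a ^ t * b ^ (1-t)))
        = (kantorovich x ^ r' * kantorovich x ^ (-r')) * ((a ^ (1-t) * a ^ t) * (b ^ t * b ^ (1-t)))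
        by ring, ← Real.rpow_add hKpos, ← Real.rpow_add ha, ← Real.rpow_add hb]
    simp [Real.rpow_one]
  have hamgm : 2 * Real.sqrt (a * b) ≤ u + v := by
    have h1 : Real.sqrt u ^ 2 = u := Real.sq_sqrt hupos.le
    have h2 : Real.sqrt v ^ 2 = v := Real.sq_sqrt hvpos.le
    have h3 : Real.sqrt u * Real.sqrt v = Real.sqrt (a * b) := by
      rw [← Real.sqrt_mul hupos.le, huv]
    nlinarith [sq_nonneg (Real.sqrt u - Real.sqrt v)]
  -- combine
  have expand : t * a + (1 - t) * b
      = (1 - t) * (Real.sqrt a - Real.sqrt b) ^ 2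
        + (2 * Real.sqrt (a*b) - ((1 - 2*t) * a + (1 - (1 - 2*t)) * Real.sqrt (a*b))) := by
    nlinarith [hsa, hsb, hsab]
  rw [expand]
  have : 2 * Real.sqrt (a*b) - ((1 - 2*t) * a + (1 - (1 - 2*t)) * Real.sqrt (a*b)) ≤ v := by
    linarith [hz, hamgm]
  linarith

lemma key_full {a b t : ℝ} (ha : 0 < a) (hb : 0 < b) (ht0 : 0 ≤ t) (ht : t ≤ 1) :
    t * a + (1 - t) * b
      ≤ kantorovich (Real.sqrt (a / b))
          ^ (-(min (2 * min t (1 - t)) (1 - 2 * min t (1 - t)))) * (a ^ t * b ^ (1 - t))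
        + max t (1 - t) * (Real.sqrt a - Real.sqrt b) ^ 2 := by
  rcases le_or_gt t (1/2) with h | h
  · rw [show min t (1 - t) = t from min_eq_left (by linarith),
        max_eq_right (by linarith)]
    exact key_half ha hb ht0 h
  · rw [show min t (1 - t) = 1 - t from min_eq_right (by linarith),
        max_eq_left (by linarith)]
    have hs := key_half hb ha (t := 1 - t) (by linarith) (by linarith)
    have hK : kantorovich (Real.sqrt (b / a)) = kantorovich (Real.sqrt (a / b)) := by
      rw [show b / a = (a / b)⁻¹ by rw [inv_div], Real.sqrt_inv]
      exact kant_inv_s1 (Real.sqrt_pos.mpr (by positivity))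
    rw [hK, show 1 - (1 - t) = t by ring] at hs
    calc t * a + (1 - t) * b = (1 - t) * b + t * a := by ring
      _ ≤ kantorovich (Real.sqrt (a / b)) ^ (-(min (2 * (1 - t)) (1 - 2 * (1 - t))))
            * (b ^ (1 - t) * a ^ t) + t * (Real.sqrt b - Real.sqrt a) ^ 2 := hs
      _ = kantorovich (Real.sqrt (a / b)) ^ (-(min (2 * (1 - t)) (1 - 2 * (1 - t))))
            * (a ^ t * b ^ (1 - t)) + t * (Real.sqrt a - Real.sqrt b) ^ 2 := by ring

theorem stmt_1 (ρ σ ν κ : ℝ) (hρ : 0 < ρ) (hσ : 0 < σ)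
    (hν : 0 ≤ ν) (hνκ : ν < κ) (hκ : κ ≤ 1)
    (r R r' : ℝ) (hr : r = min (ν / κ) (1 - ν / κ)) (hR : R = max (ν / κ) (1 - ν / κ))
    (hr' : r' = min (2 * r) (1 - 2 * r)) :
    ν * ρ + (1 - ν) * σ - (ν / κ) * (κ * ρ + (1 - κ) * σ - ρ ^ κ * σ ^ (1 - κ))
      ≤ kantorovich ((ρ / σ) ^ (κ / 2)) ^ (-r') * (ρ ^ ν * σ ^ (1 - ν))
        + R * (Real.sqrt (ρ ^ κ * σ ^ (1 - κ)) - Real.sqrt σ) ^ 2 := by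
  have hκpos : 0 < κ := lt_of_le_of_lt hν hνκ
  set t := ν / κ with htdef
  have ht0 : 0 ≤ t := by positivity
  have ht1 : t ≤ 1 := by
    rw [htdef, div_le_one hκpos]; linarith
  have htκ : t * κ = ν := div_mul_cancel₀ ν hκpos.ne'
  set a := ρ ^ κ * σ ^ (1 - κ) with hadef
  have ha : 0 < a := by positivity
  have hab : a / σ = (ρ / σ) ^ κ := by
    rw [hadef, Real.div_rpow hρ.le hσ.le]
    rw [show (1 : ℝ) - κ = 1 + -κ by ring, Real.rpow_add hσ, Real.rpow_one,
        Real.rpow_neg hσ.le]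
    field_simp
  have hsqrt : Real.sqrt (a / σ) = (ρ / σ) ^ (κ / 2) := by
    rw [hab, Real.sqrt_eq_rpow, ← Real.rpow_mul (by positivity : (0:ℝ) ≤ ρ / σ),
        show κ * (1/2 : ℝ) = κ / 2 by ring]
  have hgeo : a ^ t * σ ^ (1 - t) = ρ ^ ν * σ ^ (1 - ν) := by
    rw [hadef, Real.mul_rpow (by positivity) (by positivity),
        ← Real.rpow_mul hρ.le, ← Real.rpow_mul hσ.le,
        show κ * t = ν by rw [mul_comm]; exact htκ, mul_assoc,
        ← Real.rpow_add hσ,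
        show (1 - κ) * t + (1 - t) = 1 - ν by rw [← htκ]; ring]
  have hLHS : ν * ρ + (1 - ν) * σ - t * (κ * ρ + (1 - κ) * σ - a)
      = t * a + (1 - t) * σ := by
    have : ν = t * κ := htκ.symm
    rw [this]; ring
  rw [hLHS, hR, hr', hr, ← hgeo, ← hsqrt]
  exact key_full ha hσ ht0 ht1
end

section
/- Let ρ, σ > 0 and 0 ≤ ν < κ ≤ 1. Set r = min{ν/κ, 1 − ν/κ} and r' = min{2r, 1 − 2r}. Then r·(H_κ(ρ,σ) + H_0(ρ,σ) − 2·H_{κ/2}(ρ,σ)) + K((ρ/σ)^{κ/2}, 2)^{r'} · H_ν(ρ,σ) ≤ H_0(ρ,σ) − (ν/κ)·(H_0(ρ,σ) − H_κ(ρ,σ)). -/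
/-- The Heinz mean `H_μ(ρ,σ) = (ρ^μ σ^(1-μ) + ρ^(1-μ) σ^μ)/2`. -/
noncomputable def heinz (μ ρ σ : ℝ) : ℝ := (ρ ^ μ * σ ^ (1 - μ) + ρ ^ (1 - μ) * σ ^ μ) / 2

lemma kantorovich_inv (t : ℝ) (ht : 0 < t) : kantorovich t⁻¹ = kantorovich t := by
  unfold kantorovich
  field_simp
  ring

lemma zhao_wu_half (X Y l : ℝ) (hX : 0 < X) (hY : 0 < Y) (h0 : 0 ≤ l) (h1 : l ≤ 1/2) :
    kantorovich (X/Y) ^ l * (X ^ l * Y ^ (1 - l)) ≤ l * X + (1 - l) * Y := by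
  have hXY : (0:ℝ) < X + Y := by linarith
  have key : kantorovich (X/Y) ^ l * (X ^ l * Y ^ (1 - l))
      = ((X+Y)/2) ^ (2*l) * Y ^ (1-2*l) := by
    have hK : kantorovich (X/Y) = ((X+Y)/2)^(2:ℕ) / (X*Y) := by
      unfold kantorovich
      field_simp
      ring
    rw [hK, Real.div_rpow (by positivity) (by positivity),
        ← Real.rpow_natCast ((X+Y)/2) 2, ← Real.rpow_mul (by positivity),
        Real.mul_rpow hX.le hY.le]
    have e1 : Y ^ (1-l) = Y ^ (1-2*l) * Y ^ l := by
      rw [← Real.rpow_add hY]; ring_nf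
    have e2 : ((2:ℕ):ℝ) * l = 2*l := by norm_num
    rw [e1, e2]
    have hXl : X ^ l ≠ 0 := (Real.rpow_pos_of_pos hX l).ne'
    have hYl : Y ^ l ≠ 0 := (Real.rpow_pos_of_pos hY l).ne'
    field_simp
  rw [key]
  have h := Real.geom_mean_le_arith_mean2_weighted (by linarith : (0:ℝ) ≤ 2*l)
    (by linarith : (0:ℝ) ≤ 1-2*l) (by positivity : (0:ℝ) ≤ (X+Y)/2) hY.le (by ring)
  calc ((X+Y)/2) ^ (2*l) * Y ^ (1-2*l) ≤ 2*l*((X+Y)/2) + (1-2*l)*Y := h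
    _ = l * X + (1 - l) * Y := by ring

lemma zhao_wu (X Y l : ℝ) (hX : 0 < X) (hY : 0 < Y) (h0 : 0 ≤ l) (h1 : l ≤ 1) :
    kantorovich (X/Y) ^ (min l (1-l)) * (X ^ l * Y ^ (1 - l)) ≤ l * X + (1 - l) * Y := by
  rcases le_or_gt l (1/2) with hc | hc
  · rw [min_eq_left (by linarith)]
    exact zhao_wu_half X Y l hX hY h0 hc
  · rw [min_eq_right (by linarith)]
    have h := zhao_wu_half Y X (1-l) hY hX (by linarith) (by linarith)
    have hinv : Y / X = (X/Y)⁻¹ := by field_simp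
    rw [hinv, kantorovich_inv _ (by positivity), show (1-(1-l)) = l by ring] at h
    calc kantorovich (X/Y) ^ (1-l) * (X ^ l * Y ^ (1 - l))
        = kantorovich (X/Y) ^ (1-l) * (Y ^ (1-l) * X ^ l) := by ring
      _ ≤ (1-l) * Y + l * X := h
      _ = l * X + (1 - l) * Y := by ring

lemma liao_wu (a b g h : ℝ) (ha : 0 < a) (hb : 0 < b) (hg : 0 < g)
    (hg2 : g * g = a * b) (hh2 : h = g / b)
    (μ : ℝ) (hμ0 : 0 ≤ μ) (hμ1 : μ ≤ 1) (r r' : ℝ)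
    (hr : r = min μ (1-μ)) (hr' : r' = min (2*r) (1-2*r)) :
    kantorovich h ^ r' * (a ^ μ * b ^ (1-μ)) + r * (a + b - 2*g) ≤ μ * a + (1-μ) * b := by
  have hab : a ^ μ * b ^ μ = g ^ (2*μ) := by
    rw [← Real.mul_rpow ha.le hb.le, ← hg2, show g*g = g^(1+1:ℝ) by
      rw [Real.rpow_add hg, Real.rpow_one], ← Real.rpow_mul hg.le]
    norm_num [mul_comm]
  rcases le_or_gt μ (1/2) with hc | hc
  · have hrμ : r = μ := by rw [hr, min_eq_left (by linarith)]
    have hzw := zhao_wu g b (2*μ) hg hb (by linarith) (by linarith)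
    rw [← hh2] at hzw
    have hr'' : r' = min (2*μ) (1-2*μ) := by rw [hr', hrμ]
    have hpow : g ^ (2*μ) * b ^ (1-2*μ) = a ^ μ * b ^ (1-μ) := by
      rw [← hab]
      rw [show (1-μ:ℝ) = μ + (1-2*μ) by ring, Real.rpow_add hb]
      ring
    rw [hr'', ← hpow, hrμ]
    linarith
  · have hrμ : r = 1-μ := by rw [hr, min_eq_right (by linarith)]
    have hzw := zhao_wu a g (2*μ-1) ha hg (by linarith) (by linarith)
    have hag : a / g = h := by
      rw [hh2, div_eq_div_iff hg.ne' hb.ne', mul_comm g g, hg2]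
    rw [hag] at hzw
    have hr'' : r' = min (2*μ-1) (1-(2*μ-1)) := by
      have e1 : 2*r = 1-(2*μ-1) := by rw [hrμ]; ring
      have e2 : 1-2*r = 2*μ-1 := by rw [hrμ]; ring
      rw [hr', e2, e1, min_comm]
    have hpow : a ^ (2*μ-1) * g ^ (1-(2*μ-1)) = a ^ μ * b ^ (1-μ) := by
      have : g ^ (1-(2*μ-1)) = a ^ (1-μ) * b ^ (1-μ) := by
        rw [show (1-(2*μ-1):ℝ) = 2*(1-μ) by ring, ← Real.mul_rpow ha.le hb.le,
          ← hg2, show g*g = g^(1+1:ℝ) by rw [Real.rpow_add hg, Real.rpow_one],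
          ← Real.rpow_mul hg.le]
        norm_num [mul_comm]
      rw [this, show (μ:ℝ) = (2*μ-1) + (1-μ) by ring, Real.rpow_add ha]
      ring
    rw [hr'', ← hpow, hrμ]
    linarith

theorem stmt_2 (ρ σ ν κ : ℝ) (hρ : 0 < ρ) (hσ : 0 < σ)
    (hν : 0 ≤ ν) (hνκ : ν < κ) (hκ : κ ≤ 1)
    (r r' : ℝ) (hr : r = min (ν / κ) (1 - ν / κ)) (hr' : r' = min (2 * r) (1 - 2 * r)) :
    r * (heinz κ ρ σ + heinz 0 ρ σ - 2 * heinz (κ / 2) ρ σ)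
      + kantorovich ((ρ / σ) ^ (κ / 2)) ^ r' * heinz ν ρ σ
    ≤ heinz 0 ρ σ - (ν / κ) * (heinz 0 ρ σ - heinz κ ρ σ) := by
  have hκ0 : 0 < κ := lt_of_le_of_lt hν hνκ
  set μ := ν / κ with hμ
  have hμ0 : 0 ≤ μ := by positivity
  have hμ1 : μ ≤ 1 := by rw [hμ, div_le_one hκ0]; linarith
  have hκμ : κ * μ = ν := by rw [hμ]; field_simp
  -- first pair
  have hσκ : (σ:ℝ)^(κ/2) ≠ 0 := (Real.rpow_pos_of_pos hσ _).ne'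
  have hρκ : (ρ:ℝ)^(κ/2) ≠ 0 := (Real.rpow_pos_of_pos hρ _).ne'
  have hg1 : ρ^(κ/2) * σ^(1-κ/2) * (ρ^(κ/2) * σ^(1-κ/2)) = ρ^κ * σ^(1-κ) * σ := by
    calc ρ^(κ/2) * σ^(1-κ/2) * (ρ^(κ/2) * σ^(1-κ/2))
        = ρ^(κ/2+κ/2) * σ^((1-κ/2)+(1-κ/2)) := by
          rw [Real.rpow_add hρ, Real.rpow_add hσ]; ring
      _ = ρ^κ * σ^((1-κ)+1) := by
          rw [show κ/2+κ/2 = κ by ring, show (1-κ/2)+(1-κ/2) = (1-κ)+1 by ring]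
      _ = ρ^κ * σ^(1-κ) * σ := by rw [Real.rpow_add hσ, Real.rpow_one]; ring
  have hg2' : ρ^(1-κ/2) * σ^(κ/2) * (ρ^(1-κ/2) * σ^(κ/2)) = ρ^(1-κ) * σ^κ * ρ := by
    calc ρ^(1-κ/2) * σ^(κ/2) * (ρ^(1-κ/2) * σ^(κ/2))
        = ρ^((1-κ/2)+(1-κ/2)) * σ^(κ/2+κ/2) := by
          rw [Real.rpow_add hρ, Real.rpow_add hσ]; ring
      _ = ρ^((1-κ)+1) * σ^κ := by
          rw [show κ/2+κ/2 = κ by ring, show (1-κ/2)+(1-κ/2) = (1-κ)+1 by ring]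
      _ = ρ^(1-κ) * σ^κ * ρ := by rw [Real.rpow_add hρ, Real.rpow_one]; ring
  have hh1 : (ρ/σ)^(κ/2) = ρ^(κ/2) * σ^(1-κ/2) / σ := by
    rw [Real.div_rpow hρ.le hσ.le, show (1-κ/2) = 1 + -(κ/2) by ring,
      Real.rpow_add hσ, Real.rpow_one, Real.rpow_neg hσ.le]
    field_simp
  have hh2' : (σ/ρ)^(κ/2) = ρ^(1-κ/2) * σ^(κ/2) / ρ := by
    rw [Real.div_rpow hσ.le hρ.le, show (1-κ/2) = 1 + -(κ/2) by ring,
      Real.rpow_add hρ, Real.rpow_one, Real.rpow_neg hρ.le]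
    field_simp
  have h1 := liao_wu (ρ^κ * σ^(1-κ)) σ (ρ^(κ/2) * σ^(1-κ/2)) ((ρ/σ)^(κ/2))
    (by positivity) hσ (by positivity) hg1 hh1
    μ hμ0 hμ1 r r' hr hr'
  -- second pair
  have h2 := liao_wu (ρ^(1-κ) * σ^κ) ρ (ρ^(1-κ/2) * σ^(κ/2)) ((σ/ρ)^(κ/2))
    (by positivity) hρ (by positivity) hg2' hh2'
    μ hμ0 hμ1 r r' hr hr'
  -- rewrite the Kantorovich constants to be equal
  have hKeq : kantorovich ((σ/ρ)^(κ/2)) = kantorovich ((ρ/σ)^(κ/2)) := by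
    rw [show (σ/ρ : ℝ) = (ρ/σ)⁻¹ by field_simp, Real.inv_rpow (by positivity),
      kantorovich_inv _ (by positivity)]
  rw [hKeq] at h2
  -- rewrite the geometric means
  have hgm1 : (ρ^κ * σ^(1-κ)) ^ μ * σ ^ (1-μ) = ρ^ν * σ^(1-ν) := by
    rw [Real.mul_rpow (by positivity) (by positivity),
      ← Real.rpow_mul hρ.le, ← Real.rpow_mul hσ.le, hκμ, mul_assoc,
      ← Real.rpow_add hσ, show ((1-κ)*μ + (1-μ)) = 1 - κ*μ by ring, hκμ]
  have hgm2 : (ρ^(1-κ) * σ^κ) ^ μ * ρ ^ (1-μ) = ρ^(1-ν) * σ^ν := by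
    rw [Real.mul_rpow (by positivity) (by positivity),
      ← Real.rpow_mul hρ.le, ← Real.rpow_mul hσ.le, hκμ]
    rw [mul_comm (ρ^((1-κ)*μ)) (σ^ν), mul_assoc, ← Real.rpow_add hρ,
      show ((1-κ)*μ + (1-μ)) = 1 - κ*μ by ring, hκμ]
    ring
  rw [hgm1] at h1
  rw [hgm2] at h2
  -- unfold heinz and conclude by linear arithmetic
  simp only [heinz, Real.rpow_zero, Real.rpow_one, sub_zero, one_mul, mul_one]
  set K := kantorovich ((ρ/σ)^(κ/2)) ^ r' with hK
  have e1 : K * ((ρ^ν * σ^(1-ν) + ρ^(1-ν) * σ^ν)/2)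
      = (K * (ρ^ν * σ^(1-ν)) + K * (ρ^(1-ν) * σ^ν))/2 := by ring
  linarith
end

section
/- Let ρ, σ > 0 and 0 ≤ ν < κ ≤ 1. Set r = min{ν/κ, 1 − ν/κ}, R = max{ν/κ, 1 − ν/κ} and r' = min{2r, 1 − 2r}. Then H_0(ρ,σ) − (ν/κ)·(H_0(ρ,σ) − H_κ(ρ,σ)) ≤ K((ρ/σ)^{κ/2}, 2)^{−r'} · H_ν(ρ,σ) + R·(H_κ(ρ,σ) + H_0(ρ,σ) − 2·H_{κ/2}(ρ,σ)). -/
/-!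
With `a = ρ^κ σ^(1-κ)`, `b = σ^κ ρ^(1-κ)` and `t = ν/κ`, each side of the inequality is the
average of the same expression for the pair `(σ, a)` and for the pair `(ρ, b)`: a refined Young
inequality `(1-t)x + ty ≤ K(h)^(-r') x^(1-t) y^t + R (√x - √y)^2` with `h = √(y/x)`, and
`K(h) = K(h⁻¹)` makes the two Kantorovich factors agree. Normalising `x = 1`, `y = h^2`, the Young
gap `(1-t) + t h^2 - (1-t)(1-h)^2` is at most the weighted harmonic mean `h/((1-2t)h + 2t)`, and
the harmonic mean is at most `K(h)^(-r') h^(2t)`: weighted AM-GM applied to `2h/(h+1)` when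
`t ≤ 1/4`, and to `(h+1)/2` when `t ≥ 1/4`.
-/

open Real

lemma kantorovich_pos {h : ℝ} (hh : 0 < h) : 0 < kantorovich h := by
  unfold kantorovich; positivity

lemma kantorovich_inv_s3 (h : ℝ) : kantorovich h⁻¹ = kantorovich h := by
  rcases eq_or_ne h 0 with rfl | hh
  · simp
  · unfold kantorovich
    field_simp
    ring

lemma weighted_harmonic_le_rpow {m α : ℝ} (hm : 0 < m) (hα0 : 0 ≤ α) (hα1 : α ≤ 1) :
    m / ((1 - α) * m + α) ≤ m ^ α := by
  have hbern : m ^ (1 - α) ≤ (1 - α) * m + α := by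
    have := rpow_one_add_le_one_add_mul_self (s := m - 1) (by linarith) (p := 1 - α)
      (by linarith) (by linarith)
    simp only [add_sub_cancel] at this
    linarith
  have hden : 0 < (1 - α) * m + α := (rpow_pos_of_pos hm _).trans_le hbern
  rw [div_le_iff₀ hden]
  calc m = m ^ α * m ^ (1 - α) := by rw [← rpow_add hm, add_sub_cancel, rpow_one]
    _ ≤ m ^ α * ((1 - α) * m + α) := by gcongr

lemma harmonic_le_kantorovich_rpow_mul_rpow_of_le_half {h p : ℝ} (hh : 0 < h) (hp0 : 0 ≤ p)
    (hp : p ≤ 1 / 2) :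
    h / ((1 - p) * h + p) ≤ kantorovich h ^ (-p) * h ^ p := by
  set m := 2 * h / (h + 1) with hm
  have hm0 : 0 < m := by positivity
  have hmsq : m ^ 2 = h / kantorovich h := by
    rw [hm, kantorovich]
    field_simp
    ring
  have hrhs : kantorovich h ^ (-p) * h ^ p = m ^ (2 * p) := by
    rw [rpow_mul hm0.le, rpow_two, hmsq, div_rpow hh.le (kantorovich_pos hh).le,
      rpow_neg (kantorovich_pos hh).le]
    ring
  have hlhs : h / ((1 - p) * h + p) = m / ((1 - 2 * p) * m + 2 * p) := by
    rw [hm]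
    field_simp
    ring
  rw [hrhs, hlhs]
  exact weighted_harmonic_le_rpow hm0 (by linarith) (by linarith)

lemma harmonic_le_kantorovich_rpow_mul_rpow_of_half_le {h p : ℝ} (hh : 0 < h) (hp : 1 / 2 ≤ p)
    (hp1 : p ≤ 1) :
    h / ((1 - p) * h + p) ≤ kantorovich h ^ (-(1 - p)) * h ^ p := by
  set w := (h + 1) / 2 with hw
  have hw0 : 0 < w := by positivity
  have hK := kantorovich_pos hh
  have hwsq : w ^ 2 = h * kantorovich h := by
    rw [hw, kantorovich]
    field_simp
    ring
  have hrhs : kantorovich h ^ (-(1 - p)) * h ^ p = h / w ^ (2 * (1 - p)) := by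
    rw [rpow_mul hw0.le, rpow_two, hwsq, mul_rpow hh.le hK.le, rpow_neg hK.le,
      eq_div_iff (by positivity)]
    have hhp : h ^ p * h ^ (1 - p) = h := by rw [← rpow_add hh, add_sub_cancel, rpow_one]
    field_simp
    linear_combination hhp
  have hbern : w ^ (2 * (1 - p)) ≤ (1 - p) * h + p := by
    have := rpow_one_add_le_one_add_mul_self (s := w - 1) (by linarith) (p := 2 * (1 - p))
      (by linarith) (by linarith)
    simp only [add_sub_cancel] at this
    calc _ ≤ _ := this
      _ = (1 - p) * h + p := by rw [hw]; ring
  rw [hrhs]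
  exact div_le_div_of_nonneg_left hh.le (rpow_pos_of_pos hw0 _) hbern

lemma harmonic_le_kantorovich_rpow_mul_rpow {h p : ℝ} (hh : 0 < h) (hp0 : 0 ≤ p)
    (hp1 : p ≤ 1) :
    h / ((1 - p) * h + p) ≤ kantorovich h ^ (-min p (1 - p)) * h ^ p := by
  rcases le_total p (1 / 2) with hp | hp
  · rw [min_eq_left (by linarith)]
    exact harmonic_le_kantorovich_rpow_mul_rpow_of_le_half hh hp0 hp
  · rw [min_eq_right (by linarith)]
    exact harmonic_le_kantorovich_rpow_mul_rpow_of_half_le hh hp hp1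

lemma young_gap_le_harmonic {h p : ℝ} (hh : 0 < h) (hp0 : 0 ≤ p) (hp1 : p ≤ 1) :
    (2 - p) * h - (1 - p) * h ^ 2 ≤ h / ((1 - p) * h + p) := by
  have hden : 0 < (1 - p) * h + p := by
    rcases hp1.lt_or_eq with hp1 | rfl
    · nlinarith
    · norm_num
  rw [le_div_iff₀ hden]
  nlinarith [mul_nonneg hh.le (sq_nonneg ((1 - p) * (h - 1)))]

lemma young_refined_of_le_half {h t : ℝ} (hh : 0 < h) (ht0 : 0 ≤ t) (ht : t ≤ 1 / 2) :
    (1 - t) + t * h ^ 2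
      ≤ kantorovich h ^ (-min (2 * t) (1 - 2 * t)) * h ^ (2 * t) + (1 - t) * (1 - h) ^ 2 := by
  have hgap := young_gap_le_harmonic hh (p := 2 * t) (by linarith) (by linarith)
  have hharm := harmonic_le_kantorovich_rpow_mul_rpow hh (p := 2 * t) (by linarith)
    (by linarith)
  linarith

lemma young_refined {h t : ℝ} (hh : 0 < h) (ht0 : 0 ≤ t) (ht1 : t ≤ 1) :
    (1 - t) + t * h ^ 2
      ≤ kantorovich h ^ (-min (2 * min t (1 - t)) (1 - 2 * min t (1 - t))) * h ^ (2 * t)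
        + max t (1 - t) * (1 - h) ^ 2 := by
  rcases le_total t (1 / 2) with ht | ht
  · rw [min_eq_left (show t ≤ 1 - t by linarith), max_eq_right (by linarith)]
    exact young_refined_of_le_half hh ht0 ht
  · rw [min_eq_right (show 1 - t ≤ t by linarith), max_eq_left (by linarith)]
    -- the case `1/2 ≤ t` is the case `1 - t ≤ 1/2` for `h⁻¹`, scaled by `h ^ 2`
    have hsym := young_refined_of_le_half (inv_pos.2 hh) (t := 1 - t) (by linarith)
      (by linarith)
    rw [kantorovich_inv_s3, inv_rpow hh.le] at hsym
    set K := kantorovich h ^ (-min (2 * (1 - t)) (1 - 2 * (1 - t)))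
    have hpow : h ^ 2 * (h ^ (2 * (1 - t)))⁻¹ = h ^ (2 * t) := by
      rw [← rpow_neg hh.le, ← rpow_two, ← rpow_add hh]
      ring_nf
    have hscale := mul_le_mul_of_nonneg_left hsym (sq_nonneg h)
    have hlhs : h ^ 2 * (1 - (1 - t) + (1 - t) * h⁻¹ ^ 2) = 1 - t + t * h ^ 2 := by
      field_simp
      ring
    have hrhs : h ^ 2 * (K * (h ^ (2 * (1 - t)))⁻¹ + (1 - (1 - t)) * (1 - h⁻¹) ^ 2)
        = K * h ^ (2 * t) + t * (1 - h) ^ 2 := by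
      rw [← hpow]
      field_simp
      ring
    linarith

lemma mul_div_rpow_eq {ρ σ : ℝ} (hρ : 0 < ρ) (hσ : 0 < σ) (c : ℝ) :
    σ * (ρ / σ) ^ c = ρ ^ c * σ ^ (1 - c) := by
  rw [div_rpow hρ.le hσ.le, rpow_sub hσ, rpow_one]
  field_simp

lemma weighted_mean_le_kantorovich {ρ σ κ t : ℝ} (hρ : 0 < ρ) (hσ : 0 < σ) (ht0 : 0 ≤ t)
    (ht1 : t ≤ 1) :
    (1 - t) * σ + t * (ρ ^ κ * σ ^ (1 - κ))
      ≤ kantorovich ((ρ / σ) ^ (κ / 2)) ^ (-min (2 * min t (1 - t)) (1 - 2 * min t (1 - t)))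
          * (ρ ^ (κ * t) * σ ^ (1 - κ * t))
        + max t (1 - t) * (ρ ^ κ * σ ^ (1 - κ) + σ - 2 * (ρ ^ (κ / 2) * σ ^ (1 - κ / 2))) := by
  set h := (ρ / σ) ^ (κ / 2)
  have hh : 0 < h := by positivity
  have hyoung := mul_le_mul_of_nonneg_left (young_refined hh ht0 ht1) hσ.le
  have e2 : σ * h ^ 2 = ρ ^ κ * σ ^ (1 - κ) := by
    rw [← rpow_two, ← rpow_mul (div_pos hρ hσ).le, div_mul_cancel₀ κ two_ne_zero,
      mul_div_rpow_eq hρ hσ]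
  have e2t : σ * h ^ (2 * t) = ρ ^ (κ * t) * σ ^ (1 - κ * t) := by
    rw [← rpow_mul (div_pos hρ hσ).le, show κ / 2 * (2 * t) = κ * t by ring,
      mul_div_rpow_eq hρ hσ]
  have e1 : σ * h = ρ ^ (κ / 2) * σ ^ (1 - κ / 2) := mul_div_rpow_eq hρ hσ _
  rw [← e2, ← e2t, ← e1]
  linear_combination hyoung

theorem stmt_3_general (ρ σ ν κ : ℝ) (hρ : 0 < ρ) (hσ : 0 < σ)
    (hν : 0 ≤ ν) (hνκ : ν < κ)
    (r R r' : ℝ) (hr : r = min (ν / κ) (1 - ν / κ)) (hR : R = max (ν / κ) (1 - ν / κ))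
    (hr' : r' = min (2 * r) (1 - 2 * r)) :
    heinz 0 ρ σ - (ν / κ) * (heinz 0 ρ σ - heinz κ ρ σ)
      ≤ kantorovich ((ρ / σ) ^ (κ / 2)) ^ (-r') * heinz ν ρ σ
        + R * (heinz κ ρ σ + heinz 0 ρ σ - 2 * heinz (κ / 2) ρ σ) := by
  subst hr' hr hR
  have hκ : 0 < κ := hν.trans_lt hνκ
  set t := ν / κ
  have ht0 : 0 ≤ t := div_nonneg hν hκ.le
  have ht1 : t ≤ 1 := ((div_lt_one hκ).2 hνκ).le
  have hκt : κ * t = ν := mul_div_cancel₀ ν hκ.ne'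
  have hρσ := weighted_mean_le_kantorovich hρ hσ (κ := κ) ht0 ht1
  have hσρ := weighted_mean_le_kantorovich hσ hρ (κ := κ) ht0 ht1
  rw [← inv_div, inv_rpow (div_pos hρ hσ).le, kantorovich_inv_s3] at hσρ
  rw [hκt] at hρσ hσρ
  simp only [heinz, rpow_zero, sub_zero, rpow_one, one_mul, mul_one]
  linear_combination (hρσ + hσρ) / 2

theorem stmt_3 (ρ σ ν κ : ℝ) (hρ : 0 < ρ) (hσ : 0 < σ)
    (hν : 0 ≤ ν) (hνκ : ν < κ) (hκ : κ ≤ 1)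
    (r R r' : ℝ) (hr : r = min (ν / κ) (1 - ν / κ)) (hR : R = max (ν / κ) (1 - ν / κ))
    (hr' : r' = min (2 * r) (1 - 2 * r)) :
    heinz 0 ρ σ - (ν / κ) * (heinz 0 ρ σ - heinz κ ρ σ)
      ≤ kantorovich ((ρ / σ) ^ (κ / 2)) ^ (-r') * heinz ν ρ σ
        + R * (heinz κ ρ σ + heinz 0 ρ σ - 2 * heinz (κ / 2) ρ σ) :=
  stmt_3_general ρ σ ν κ hρ hσ hν hνκ r R r' hr hR hr'
end

section
/- Let ρ, σ > 0 and let p, q > 1 satisfy 1/p + 1/q = 1. Set r₀ = min{1/p, 1/q}. Then for every natural number m ≥ 1 and every real r ≥ 1: (ρ^{1/p} σ^{1/q})^m + r₀^m · (ρ^{m/2} − σ^{m/2})² ≤ (ρ^r/p + σ^r/q)^{m/r}. -/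
open Finset

private lemma binom_one (ν : ℝ) (m : ℕ) :
    ∑ j ∈ range (m+1), ν^j * (1-ν)^(m-j) * (m.choose j : ℝ) = 1 := by
  have h := add_pow ν (1-ν) m
  simp only [add_sub_cancel] at h
  rw [← h]; norm_num

private lemma binom_mean (ν : ℝ) (m : ℕ) :
    ∑ j ∈ range (m+1), (j:ℝ) * (ν^j * (1-ν)^(m-j) * (m.choose j : ℝ)) = m * ν := by
  cases m with
  | zero => simp
  | succ n =>
    rw [Finset.sum_range_succ']
    simp only [Nat.cast_zero, zero_mul, add_zero]
    have key : ∀ k ∈ range (n+1),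
        ((k+1:ℕ):ℝ) * (ν^(k+1) * (1-ν)^(n+1-(k+1)) * (((n+1).choose (k+1) : ℕ) : ℝ))
        = (((n:ℝ)+1) * ν) * (ν^k * (1-ν)^(n-k) * (n.choose k : ℝ)) := by
      intro k hk
      have h1 : ((k+1) * (n+1).choose (k+1) : ℕ) = ((n+1) * n.choose k : ℕ) := by
        rw [mul_comm (k+1)]
        exact (Nat.add_one_mul_choose_eq n k).symm
      have h2 : ((k:ℝ)+1) * (((n+1).choose (k+1) : ℕ) : ℝ) = ((n:ℝ)+1) * ((n.choose k : ℕ) : ℝ) := by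
        have := congrArg (fun t : ℕ => (t : ℝ)) h1
        push_cast at this
        linarith
      have h3 : n + 1 - (k+1) = n - k := by omega
      rw [h3]
      push_cast
      calc ((k:ℝ)+1) * (ν^(k+1) * (1-ν)^(n-k) * (((n+1).choose (k+1) : ℕ) : ℝ))
          = (((k:ℝ)+1) * (((n+1).choose (k+1) : ℕ) : ℝ)) * (ν^(k+1) * (1-ν)^(n-k)) := by ring
        _ = (((n:ℝ)+1) * ((n.choose k : ℕ) : ℝ)) * (ν^(k+1) * (1-ν)^(n-k)) := by rw [h2]
        _ = (((n:ℝ)+1) * ν) * (ν^k * (1-ν)^(n-k) * ((n.choose k : ℕ) : ℝ)) := by ring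
    rw [Finset.sum_congr rfl key, ← Finset.mul_sum, binom_one]
    push_cast
    ring

private lemma amgm_rpow (s : Finset ℕ) (w e : ℕ → ℝ) (x : ℝ) (hx : 0 < x)
    (hw : ∀ i ∈ s, 0 ≤ w i) (hw1 : ∑ i ∈ s, w i = 1) :
    x ^ (∑ i ∈ s, w i * e i) ≤ ∑ i ∈ s, w i * x ^ (e i) := by
  have h := Real.geom_mean_le_arith_mean_weighted s w (fun i => x ^ (e i)) hw hw1
    (fun i _ => (Real.rpow_pos_of_pos hx (e i)).le)
  refine le_trans (le_of_eq ?_) h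
  simp only [Real.rpow_def_of_pos hx, ← Real.exp_mul, ← Real.exp_sum]
  congr 1
  rw [Finset.mul_sum]
  apply Finset.sum_congr rfl
  intro i _
  ring

private lemma core (ν x : ℝ) (hν : 0 < ν) (hν2 : ν ≤ 1/2) (hx : 0 < x)
    (m : ℕ) (hm : 1 ≤ m) :
    x ^ (ν * m) + ν^m * (x ^ ((m:ℝ)/2) - 1)^2 ≤ (ν * x + (1-ν))^m := by
  have h1ν : 0 ≤ 1 - ν := by linarith
  have hνν : ν ≤ 1 - ν := by linarith
  have hpow : ν^m ≤ (1-ν)^m := pow_le_pow_left₀ hν.le hνν m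
  have hm0 : m ≠ 0 := by omega
  set c : ℕ → ℝ := fun j => ν^j * (1-ν)^(m-j) * (m.choose j : ℝ) with hc
  set w : ℕ → ℝ := fun j => if j = m then 2*ν^m else if j = 0 then (1-ν)^m - ν^m else c j with hwdef
  set e : ℕ → ℝ := fun j => if j = m then (m:ℝ)/2 else (j:ℝ) with hedef
  have hcm : c m = ν^m := by simp [hc, Nat.sub_self]
  have hc0 : c 0 = (1-ν)^m := by simp [hc]
  have hcnn : ∀ j, 0 ≤ c j := fun j => by positivity
  have hw : ∀ i ∈ range (m+1), 0 ≤ w i := by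
    intro i _
    simp only [hwdef]
    split
    · positivity
    · split
      · linarith
      · exact hcnn i
  -- decomposition of w
  have hdec : ∀ j ∈ range (m+1), w j
      = c j + ((if j = 0 then -ν^m else 0) + (if j = m then ν^m else 0)) := by
    intro j _
    by_cases hjm : j = m
    · subst hjm
      simp only [hwdef, if_pos rfl, if_neg hm0, hcm, eq_self_iff_true, if_true]
      ring
    · by_cases hj0 : j = 0
      · subst hj0
        simp only [hwdef, if_neg (Ne.symm hm0), if_pos rfl, hc0, eq_self_iff_true, if_true]
        ring
      · simp [hwdef, hjm, hj0]
  have hw1 : ∑ i ∈ range (m+1), w i = 1 := by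
    rw [Finset.sum_congr rfl hdec, Finset.sum_add_distrib, binom_one,
      Finset.sum_add_distrib, Finset.sum_ite_eq' (range (m+1)) 0 (fun _ => -ν^m),
      Finset.sum_ite_eq' (range (m+1)) m (fun _ => ν^m)]
    simp [Finset.mem_range, Nat.lt_succ_iff]
  have hwe : ∑ i ∈ range (m+1), w i * e i = ν * (m:ℝ) := by
    have : ∀ j ∈ range (m+1), w j * e j = (j:ℝ) * c j := by
      intro j _
      by_cases hjm : j = m
      · subst hjm
        simp only [hwdef, hedef, if_pos rfl, hcm]
        ring
      · by_cases hj0 : j = 0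
        · subst hj0
          simp [hwdef, hedef, hm0, Ne.symm hm0]
        · simp only [hwdef, hedef, if_neg hjm, if_neg hj0]
          ring
    rw [Finset.sum_congr rfl this, binom_mean]
    ring
  have hsum : ∑ i ∈ range (m+1), w i * x ^ (e i)
      = (ν * x + (1-ν))^m - ν^m * x^m - ν^m + 2*ν^m * x^((m:ℝ)/2) := by
    have hterm : ∀ j ∈ range (m+1), w j * x ^ (e j)
        = c j * x^j + ((if j = 0 then -ν^m else 0)
            + (if j = m then 2*ν^m * x^((m:ℝ)/2) - ν^m * x^m else 0)) := by
      intro j _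
      by_cases hjm : j = m
      · subst hjm
        simp only [hwdef, hedef, if_pos rfl, if_neg hm0, hcm, eq_self_iff_true, if_true]
        ring
      · by_cases hj0 : j = 0
        · subst hj0
          simp only [hwdef, hedef, if_neg (Ne.symm hm0), if_pos rfl, if_neg hjm,
            eq_self_iff_true, if_true]
          rw [hc0]
          norm_num [Real.rpow_natCast, sub_eq_add_neg]
        · simp only [hwdef, hedef, if_neg hjm, if_neg hj0, Real.rpow_natCast]
          ring
    rw [Finset.sum_congr rfl hterm, Finset.sum_add_distrib, Finset.sum_add_distrib,
      Finset.sum_ite_eq' (range (m+1)) 0 (fun _ => -ν^m),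
      Finset.sum_ite_eq' (range (m+1)) m (fun _ => 2*ν^m * x^((m:ℝ)/2) - ν^m * x^m)]
    have hbin : ∑ j ∈ range (m+1), c j * x^j = (ν * x + (1-ν))^m := by
      rw [add_pow]
      apply Finset.sum_congr rfl
      intro j _
      simp only [hc, mul_pow]
      ring
    simp only [Finset.mem_range, Nat.lt_succ_iff, Nat.zero_le, if_pos, le_refl]
    rw [hbin]
    ring
  have amgm := amgm_rpow (range (m+1)) w e x hx hw hw1
  rw [hwe, hsum] at amgm
  have hxm : (x ^ ((m:ℝ)/2))^2 = x^m := by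
    rw [← Real.rpow_natCast (x ^ ((m:ℝ)/2)) 2, ← Real.rpow_mul hx.le]
    norm_num [Real.rpow_natCast]
  have hexp : (x ^ ((m:ℝ)/2) - 1)^2 = x^m - 2*x^((m:ℝ)/2) + 1 := by
    rw [sub_sq, hxm]; ring
  rw [hexp]
  nlinarith [amgm]

private lemma km_le (ρ σ ν : ℝ) (hρ : 0 < ρ) (hσ : 0 < σ) (hν : 0 < ν) (hν2 : ν ≤ 1/2)
    (m : ℕ) (hm : 1 ≤ m) :
    (ρ ^ ν * σ ^ (1-ν)) ^ m + ν ^ m * (ρ ^ ((m:ℝ)/2) - σ ^ ((m:ℝ)/2))^2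
      ≤ (ν * ρ + (1-ν) * σ)^m := by
  have hσ' : σ ≠ 0 := ne_of_gt hσ
  have hx : 0 < ρ / σ := div_pos hρ hσ
  have h := core ν (ρ/σ) hν hν2 hx m hm
  have h' := mul_le_mul_of_nonneg_right h (le_of_lt (pow_pos hσ m))
  -- identify the three products
  have e1 : (ρ/σ) ^ (ν * (m:ℝ)) * σ^m = (ρ ^ ν * σ ^ (1-ν)) ^ m := by
    rw [Real.div_rpow hρ.le hσ.le, mul_pow, ← Real.rpow_natCast (ρ ^ ν) m,
      ← Real.rpow_natCast (σ ^ (1-ν)) m, ← Real.rpow_mul hρ.le, ← Real.rpow_mul hσ.le,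
      ← Real.rpow_natCast σ m, div_mul_eq_mul_div, mul_div_assoc, ← Real.rpow_sub hσ]
    congr 1
    ring
  have e2 : ((ρ/σ) ^ ((m:ℝ)/2) - 1)^2 * σ^m = (ρ ^ ((m:ℝ)/2) - σ ^ ((m:ℝ)/2))^2 := by
    have hσm : σ^m = (σ ^ ((m:ℝ)/2))^2 := by
      rw [← Real.rpow_natCast (σ ^ ((m:ℝ)/2)) 2, ← Real.rpow_mul hσ.le]
      norm_num [Real.rpow_natCast]
    rw [hσm, ← mul_pow, sub_mul, one_mul, ← Real.mul_rpow (le_of_lt hx) hσ.le,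
      div_mul_cancel₀ _ hσ']
  have e3 : (ν * (ρ/σ) + (1-ν))^m * σ^m = (ν * ρ + (1-ν) * σ)^m := by
    rw [← mul_pow]
    congr 1
    field_simp
  calc (ρ ^ ν * σ ^ (1-ν)) ^ m + ν ^ m * (ρ ^ ((m:ℝ)/2) - σ ^ ((m:ℝ)/2))^2
      = ((ρ/σ) ^ (ν * (m:ℝ)) + ν^m * ((ρ/σ) ^ ((m:ℝ)/2) - 1)^2) * σ^m := by
        rw [add_mul, e1, mul_assoc, e2]
    _ ≤ (ν * (ρ/σ) + (1-ν))^m * σ^m := h'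
    _ = (ν * ρ + (1-ν) * σ)^m := e3

theorem stmt_11 (ρ σ p q : ℝ) (hρ : 0 < ρ) (hσ : 0 < σ)
    (hp : 1 < p) (hq : 1 < q) (hpq : 1 / p + 1 / q = 1)
    (r₀ : ℝ) (hr₀ : r₀ = min (1 / p) (1 / q))
    (m : ℕ) (hm : 1 ≤ m) (r : ℝ) (hr : 1 ≤ r) :
    (ρ ^ (1 / p) * σ ^ (1 / q)) ^ m
      + r₀ ^ m * (ρ ^ ((m : ℝ) / 2) - σ ^ ((m : ℝ) / 2)) ^ 2
    ≤ (ρ ^ r / p + σ ^ r / q) ^ ((m : ℝ) / r) := by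
  have hp0 : 0 < p := lt_trans one_pos hp
  have hq0 : 0 < q := lt_trans one_pos hq
  have hp1 : 0 < 1/p := by positivity
  have hq1 : 0 < 1/q := by positivity
  have hr0 : 0 < r := lt_of_lt_of_le one_pos hr
  have hA : 0 < ρ/p + σ/q := by positivity
  -- Step 1: Kittaneh–Manasrah inequality
  have km : (ρ ^ (1 / p) * σ ^ (1 / q)) ^ m
      + r₀ ^ m * (ρ ^ ((m : ℝ) / 2) - σ ^ ((m : ℝ) / 2)) ^ 2 ≤ (ρ/p + σ/q)^m := by
    rcases le_total (1/p) (1/q) with hle | hle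
    · have hmin : r₀ = 1/p := by rw [hr₀, min_eq_left hle]
      have hhalf : 1/p ≤ 1/2 := by linarith
      have h1 : 1 - 1/p = 1/q := by linarith
      have h := km_le ρ σ (1/p) hρ hσ hp1 hhalf m hm
      rw [h1] at h
      calc (ρ ^ (1 / p) * σ ^ (1 / q)) ^ m
            + r₀ ^ m * (ρ ^ ((m : ℝ) / 2) - σ ^ ((m : ℝ) / 2)) ^ 2
          = (ρ ^ (1/p) * σ ^ (1/q)) ^ m
            + (1/p) ^ m * (ρ ^ ((m:ℝ)/2) - σ ^ ((m:ℝ)/2)) ^ 2 := by rw [hmin]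
        _ ≤ (1/p * ρ + 1/q * σ)^m := h
        _ = (ρ/p + σ/q)^m := by ring_nf
    · have hmin : r₀ = 1/q := by rw [hr₀, min_eq_right hle]
      have hhalf : 1/q ≤ 1/2 := by linarith
      have h1 : 1 - 1/q = 1/p := by linarith
      have h := km_le σ ρ (1/q) hσ hρ hq1 hhalf m hm
      rw [h1] at h
      calc (ρ ^ (1 / p) * σ ^ (1 / q)) ^ m
            + r₀ ^ m * (ρ ^ ((m : ℝ) / 2) - σ ^ ((m : ℝ) / 2)) ^ 2
          = (σ ^ (1/q) * ρ ^ (1/p)) ^ m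
            + (1/q) ^ m * (σ ^ ((m:ℝ)/2) - ρ ^ ((m:ℝ)/2)) ^ 2 := by
            rw [hmin, mul_comm (ρ ^ (1/p))]
            congr 1
            ring
        _ ≤ (1/q * σ + 1/p * ρ)^m := h
        _ = (ρ/p + σ/q)^m := by ring_nf
  -- Step 2: power mean inequality
  have pm : (ρ/p + σ/q) ^ r ≤ ρ^r/p + σ^r/q := by
    have h := Real.rpow_arith_mean_le_arith_mean_rpow (univ : Finset (Fin 2))
      ![1/p, 1/q] ![ρ, σ] (by
        intro i _
        fin_cases i <;> simp <;> positivity)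
      (by simpa [Fin.sum_univ_two, one_div] using hpq) (by
        intro i _
        fin_cases i <;> simp <;> positivity) hr
    simpa [Fin.sum_univ_two, div_eq_inv_mul, mul_comm] using h
  -- Step 3: combine
  have key : (ρ/p + σ/q)^m ≤ (ρ ^ r / p + σ ^ r / q) ^ ((m : ℝ) / r) := by
    have h1 : ((ρ/p + σ/q)^r) ^ ((m:ℝ)/r) ≤ (ρ^r/p + σ^r/q) ^ ((m:ℝ)/r) := by
      apply Real.rpow_le_rpow (Real.rpow_nonneg hA.le r) pm
      positivity
    have h2 : ((ρ/p + σ/q)^r) ^ ((m:ℝ)/r) = (ρ/p + σ/q)^m := by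
      rw [← Real.rpow_natCast (ρ/p + σ/q) m, ← Real.rpow_mul hA.le]
      congr 1
      field_simp
    rw [← h2]
    exact h1
  exact le_trans km key
end

section
/- Let T₁, …, T_k ∈ M_n(ℂ) be positive definite Hermitian matrices, let γ₁, …, γ_k be nonnegative real numbers with Γ = γ₁ + ⋯ + γ_k > 0. Then (1/Γ)·∑_{i=1}^{k} γ_i·tr(T_i) + √(1 + ((1/Γ)·∑_{i=1}^{k} γ_i·tr(T_i))²) ≥ ∏_{i=1}^{k} (tr(T_i) + √(1 + tr(T_i²)))^{γ_i/Γ}. -/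
open scoped ComplexOrder

lemma arsinh_concave : ConcaveOn ℝ (Set.Ici 0) Real.arsinh := by
  apply AntitoneOn.concaveOn_of_deriv (convex_Ici 0)
    Real.continuous_arsinh.continuousOn
    (Real.differentiable_arsinh.differentiableOn)
  intro a ha b hb hab
  rw [(Real.hasDerivAt_arsinh a).deriv, (Real.hasDerivAt_arsinh b).deriv]
  simp only [interior_Ici, Set.mem_Ioi] at ha hb
  have h1 : (0:ℝ) < Real.sqrt (1 + a ^ 2) := Real.sqrt_pos.2 (by positivity)
  apply inv_anti₀ h1
  apply Real.sqrt_le_sqrt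
  nlinarith

lemma trace_facts {n : ℕ} (A : Matrix (Fin n) (Fin n) ℂ) (hA : A.PosDef) :
    0 ≤ (Matrix.trace A).re ∧ (Matrix.trace (A * A)).re ≤ (Matrix.trace A).re ^ 2 := by
  have hH := hA.1
  set U : Matrix (Fin n) (Fin n) ℂ := (hH.eigenvectorUnitary : Matrix (Fin n) (Fin n) ℂ) with hUdef
  set d : Fin n → ℂ := RCLike.ofReal ∘ hH.eigenvalues with hddef
  have hU : star U * U = 1 := (Matrix.mem_unitaryGroup_iff').mp hH.eigenvectorUnitary.2
  have hsp : A = U * Matrix.diagonal d * star U := hH.spectral_theorem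
  have htr : Matrix.trace A = ∑ i, d i := by
    rw [hsp, Matrix.trace_mul_cycle, hU, Matrix.one_mul,
      Matrix.trace_diagonal]

  have hA2 : A * A = U * Matrix.diagonal (fun i => d i * d i) * star U := by
    rw [hsp, ← Matrix.diagonal_mul_diagonal]
    calc U * Matrix.diagonal d * star U * (U * Matrix.diagonal d * star U)
        = U * Matrix.diagonal d * (star U * U) * Matrix.diagonal d * star U := by
          simp only [Matrix.mul_assoc]
      _ = U * (Matrix.diagonal d * Matrix.diagonal d) * star U := by
          rw [hU]; simp only [Matrix.mul_assoc, Matrix.one_mul]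
  have htr2 : Matrix.trace (A * A) = ∑ i, d i * d i := by
    rw [hA2, Matrix.trace_mul_cycle, hU, Matrix.one_mul,
      Matrix.trace_diagonal]
  have hev : ∀ i, 0 < hH.eigenvalues i := hA.eigenvalues_pos
  have hre : (Matrix.trace A).re = ∑ i, hH.eigenvalues i := by
    rw [htr, Complex.re_sum]; simp [hddef]
  have hre2 : (Matrix.trace (A * A)).re = ∑ i, hH.eigenvalues i * hH.eigenvalues i := by
    rw [htr2, Complex.re_sum]
    apply Finset.sum_congr rfl
    intro i _
    simp [hddef, ← Complex.ofReal_mul]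
  constructor
  · rw [hre]; exact Finset.sum_nonneg fun i _ => (hev i).le
  · rw [hre, hre2, sq, Finset.sum_mul_sum]
    apply Finset.sum_le_sum
    intro i _
    calc hH.eigenvalues i * hH.eigenvalues i
        ≤ hH.eigenvalues i * ∑ j, hH.eigenvalues j := by
          apply mul_le_mul_of_nonneg_left _ (hev i).le
          exact Finset.single_le_sum (fun j _ => (hev j).le) (Finset.mem_univ i)
      _ = ∑ j, hH.eigenvalues i * hH.eigenvalues j := by rw [Finset.mul_sum]

theorem stmt_17 {n k : ℕ} (T : Fin k → Matrix (Fin n) (Fin n) ℂ)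
    (hT : ∀ i, (T i).PosDef)
    (γ : Fin k → ℝ) (hγ : ∀ i, 0 ≤ γ i) (Γ : ℝ) (hΓ : Γ = ∑ i, γ i) (hΓ0 : 0 < Γ) :
    (1 / Γ) * ∑ i, γ i * (Matrix.trace (T i)).re
        + Real.sqrt (1 + ((1 / Γ) * ∑ i, γ i * (Matrix.trace (T i)).re) ^ 2)
      ≥ ∏ i, ((Matrix.trace (T i)).re
          + Real.sqrt (1 + (Matrix.trace (T i * T i)).re)) ^ (γ i / Γ) := by
  set t : Fin k → ℝ := fun i => (Matrix.trace (T i)).re with htdef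
  set w : Fin k → ℝ := fun i => γ i / Γ with hwdef
  have ht0 : ∀ i, 0 ≤ t i := fun i => (trace_facts _ (hT i)).1
  have hs : ∀ i, (Matrix.trace (T i * T i)).re ≤ t i ^ 2 :=
    fun i => (trace_facts _ (hT i)).2
  have hw0 : ∀ i, 0 ≤ w i := fun i => div_nonneg (hγ i) hΓ0.le
  have hw1 : ∑ i, w i = 1 := by
    simp only [hwdef, ← Finset.sum_div, ← hΓ, div_self hΓ0.ne']
  have hsum : (1 / Γ) * ∑ i, γ i * t i = ∑ i, w i * t i := by
    rw [Finset.mul_sum]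
    apply Finset.sum_congr rfl
    intro i _
    simp [hwdef]; ring
  rw [ge_iff_le, hsum]
  calc ∏ i, (t i + Real.sqrt (1 + (Matrix.trace (T i * T i)).re)) ^ (w i)
      ≤ ∏ i, (t i + Real.sqrt (1 + t i ^ 2)) ^ (w i) := by
        apply Finset.prod_le_prod
        · intro i _
          apply Real.rpow_nonneg
          have := Real.sqrt_nonneg (1 + (Matrix.trace (T i * T i)).re)
          linarith [ht0 i]
        · intro i _
          apply Real.rpow_le_rpow
          · have := Real.sqrt_nonneg (1 + (Matrix.trace (T i * T i)).re)
            linarith [ht0 i]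
          · have := Real.sqrt_le_sqrt (by linarith [hs i] :
              1 + (Matrix.trace (T i * T i)).re ≤ 1 + t i ^ 2)
            linarith
          · exact hw0 i
    _ = Real.exp (∑ i, w i * Real.arsinh (t i)) := by
        rw [Real.exp_sum]
        apply Finset.prod_congr rfl
        intro i _
        rw [← Real.exp_arsinh, mul_comm, Real.exp_mul]
    _ ≤ Real.exp (Real.arsinh (∑ i, w i * t i)) := by
        apply Real.exp_le_exp.2
        have := arsinh_concave.le_map_sum (t := Finset.univ)
          (fun i _ => hw0 i) hw1 (fun i _ => Set.mem_Ici.2 (ht0 i))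
        simpa [smul_eq_mul] using this
    _ = ∑ i, w i * t i + Real.sqrt (1 + (∑ i, w i * t i) ^ 2) := Real.exp_arsinh _
end
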